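/- arXiv:1111.6278 — 3 statements merged into one kernel-verified Lean document; each statement's English description precedes it below -/
import Mathlib

section
/- Let G be a simple graph with n vertices, s ≥ 2 edges and no isolated vertices, having exactly m connected components, of which exactly γ are non-bipartite. Then: if γ ≥ 1 and q is odd, 2^{γ−1}·|X| = (q−1)^{n−m+γ−1}; if γ ≥ 1 and q is even, |X| = (q−1)^{n−m+γ−1}; and if γ = 0, |X| = (q−1)^{n−m−1}. -/
open MvPolynomial

noncomputable section

/-- For `x : Fin n → M` and an edge `E = {j,k}` (as an element of `Sym2 (Fin n)`),
`edgeProd x E = x j * x k`. -/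
def edgeProd {M : Type} [CommMonoid M] {n : ℕ} (x : Fin n → M) (E : Sym2 (Fin n)) : M :=
  Sym2.lift ⟨fun a b => x a * x b, fun a b => mul_comm (x a) (x b)⟩ E

/-- The diagonal subgroup `Λ = {(λ,…,λ) : λ ∈ Kˣ}` of `(Kˣ)ˢ`. -/
def diagSubgroup (K : Type) [Field K] (s : ℕ) : Subgroup (Fin s → Kˣ) where
  carrier := {y | ∃ l : Kˣ, y = fun _ => l}
  one_mem' := ⟨1, rfl⟩
  mul_mem' := by rintro _ _ ⟨a, rfl⟩ ⟨b, rfl⟩; exact ⟨a * b, rfl⟩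
  inv_mem' := by rintro _ ⟨a, rfl⟩; exact ⟨a⁻¹, rfl⟩

/-- The cardinality of the image `X` of a subset `Y ⊆ (Kˣ)ˢ` under the quotient
homomorphism `(Kˣ)ˢ → (Kˣ)ˢ/Λ`. -/
def XCard (K : Type) [Field K] {s : ℕ} (Y : Set (Fin s → Kˣ)) : ℕ :=
  Nat.card ((fun y : Fin s → Kˣ =>
    (QuotientGroup.mk y : (Fin s → Kˣ) ⧸ diagSubgroup K s)) '' Y)

/-!
`|X|` is the index of the kernel of `x ↦ [θ x]`, `(Kˣ)ⁿ → (Kˣ)ˢ/Λ`. That kernel is the disjoint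
union over `l ∈ Kˣ` of the sets of `x` with `x a * x b = l` on every edge. Along a walk such an
`x` alternates between `t` and `l * t⁻¹`, so it is determined by its values at one vertex per
component, and these values are arbitrary except that on a non-bipartite component (which carries
an odd closed walk) they must be square roots of `l`. Summing over `l` the fibre sizes
`(q-1)^(m-γ) * #{t | t² = l}^γ` gives `(q-1)^(m-γ+1) * #{t | t² = 1}^(γ-1)`, and the cyclic group
`Kˣ` has `gcd (q-1) 2` square roots of unity.
-/

theorem Nat.eq_pow_of_mul_pow_eq {x b k l n : ℕ} (hb : 0 < b) (hn : l + k = n)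
    (h : x * b ^ k = b ^ n) : x = b ^ l :=
  Nat.eq_of_mul_eq_mul_right (pow_pos hb k) (by rw [h, ← pow_add, hn])

theorem Nat.card_subtype_forall_not_imp_mem {ι α : Type*} [Finite ι] (P : ι → Prop)
    (S : Set α) :
    Nat.card {f : ι → α // ∀ i, ¬ P i → f i ∈ S} =
      Nat.card α ^ Nat.card {i // P i} * Nat.card S ^ Nat.card {i // ¬ P i} := by
  classical
  have := Fintype.ofFinite ι
  have hfactor (i : ι) :
      Nat.card {a : α // ¬ P i → a ∈ S} = if P i then Nat.card α else Nat.card S := by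
    split_ifs with h
    · exact Nat.card_congr (Equiv.subtypeUnivEquiv fun _ h' => absurd h h')
    · simp [h]
  rw [Nat.card_congr (Equiv.subtypePiEquivPi (p := fun i a => ¬ P i → a ∈ S)), Nat.card_pi,
    Fintype.prod_congr _ _ hfactor, Finset.prod_ite, Finset.prod_const, Finset.prod_const]
  congr 2 <;> rw [Nat.card_eq_fintype_card, Fintype.card_subtype]

theorem MonoidHom.sum_card_preimage_pow {G : Type*} [Group G] [Fintype G] (ψ : G →* G)
    (k : ℕ) : ∑ g, Nat.card (ψ ⁻¹' {g}) ^ k = Nat.card G * Nat.card ψ.ker ^ (k - 1) := by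
  rcases k with _ | k
  · simp [Nat.card_eq_fintype_card]
  have hfiber (g : G) :
      Nat.card (ψ ⁻¹' {g}) ^ (k + 1) = Nat.card (ψ ⁻¹' {g}) * Nat.card ψ.ker ^ k := by
    by_cases hg : g ∈ Set.range ψ
    · obtain ⟨a, rfl⟩ := hg
      rw [pow_succ', Nat.card_congr (ψ.fiberEquivKer a)]
    · have : IsEmpty (ψ ⁻¹' {g}) := ⟨fun x => hg ⟨x, x.2⟩⟩
      simp
  have hsum : ∑ g, Nat.card (ψ ⁻¹' {g}) = Nat.card G := by
    rw [← Nat.card_sigma]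
    exact Nat.card_congr (Equiv.sigmaFiberEquiv ψ)
  simp only [hfiber, ← Finset.sum_mul, hsum, Nat.add_sub_cancel]

theorem QuotientGroup.card_image_mk_range_mul_card_comap {A B : Type*} [Group A] [Group B]
    [Finite A] (θ : A →* B) (N : Subgroup B) [N.Normal] :
    Nat.card ((QuotientGroup.mk : B → B ⧸ N) '' Set.range θ) * Nat.card (N.comap θ) =
      Nat.card A := by
  set φ := (QuotientGroup.mk' N).comp θ
  have himage : (QuotientGroup.mk : B → B ⧸ N) '' Set.range θ = φ.range := by
    rw [MonoidHom.coe_range, ← Set.range_comp]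
    rfl
  have hker : N.comap θ = φ.ker := by
    rw [← MonoidHom.comap_ker, QuotientGroup.ker_mk']
  rw [hker, mul_comm, ← φ.ker.card_mul_index, Subgroup.index_ker]
  exact congrArg _ (Nat.card_congr (Equiv.setCongr himage))

namespace SimpleGraph

variable {V U : Type*} [CommGroup U] {G : SimpleGraph V}

theorem exists_adj_fromEdgeSet_range {ι : Type*} {e : ι → Sym2 V} {i : ι}
    (hi : ¬ (e i).IsDiag) : ∃ a b, (fromEdgeSet (Set.range e)).Adj a b := by
  induction he : e i using Sym2.ind with
  | h a b => exact ⟨a, b, ⟨i, he⟩, fun hab => hi (he ▸ Sym2.mk_isDiag_iff.mpr hab)⟩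

theorem ConnectedComponent.card_lt_of_adj [Finite V] {a b : V} (hab : G.Adj a b) :
    Nat.card G.ConnectedComponent < Nat.card V := by
  have := Fintype.ofFinite V
  have := Fintype.ofFinite G.ConnectedComponent
  simp only [Nat.card_eq_fintype_card]
  exact Fintype.card_lt_of_surjective_not_injective _ Quot.mk_surjective
    fun hinj => hab.ne (hinj (ConnectedComponent.connectedComponentMk_eq_of_adj hab))

theorem ConnectedComponent.colorable_two_induce_supp_iff (c : G.ConnectedComponent) :
    (G.induce c.supp).Colorable 2 ↔ ∀ u ∈ c.supp, ∀ w : G.Walk u u, Even w.length := by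
  classical
  rw [two_colorable_iff_forall_loop_even]
  constructor
  · intro h u hu w
    have hw : ∀ v ∈ w.support, v ∈ c.supp := fun v hv =>
      hu ▸ ConnectedComponent.sound (w.takeUntil v hv).reachable.symm
    have := h ⟨u, hu⟩ (w.induce c.supp hw)
    rwa [← Walk.length_map (Embedding.induce c.supp).toHom, Walk.map_induce] at this
  · intro h u w
    exact w.length_map (Embedding.induce c.supp).toHom ▸ h u u.2 _

theorem Reachable.even_dist_iff_not_even_dist_of_adj {r a b : V} (ha : G.Reachable r a)
    (hr : ∀ w : G.Walk r r, Even w.length) (hab : G.Adj a b) :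
    Even (G.dist r a) ↔ ¬ Even (G.dist r b) := by
  obtain ⟨p, hp⟩ := ha.exists_walk_length_eq_dist
  obtain ⟨q, hq⟩ := (ha.trans hab.reachable).exists_walk_length_eq_dist
  have := hr ((p.concat hab).append q.reverse)
  rw [Walk.length_append, Walk.length_concat, Walk.length_reverse, hp, hq] at this
  grind

def edgeProdFiber (G : SimpleGraph V) (l : U) : Set (V → U) :=
  {x | ∀ a b, G.Adj a b → x a * x b = l}

theorem Walk.apply_eq_of_mem_edgeProdFiber {x : V → U} {l : U} (hx : x ∈ G.edgeProdFiber l)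
    {u v : V} (p : G.Walk u v) : x v = if Even p.length then x u else l * (x u)⁻¹ := by
  induction p with
  | nil => simp
  | @cons u w v h p ih =>
    have hw : x w = l * (x u)⁻¹ := eq_mul_inv_of_mul_eq (mul_comm (x w) (x u) ▸ hx u w h)
    simp only [ih, hw, Walk.length_cons, Nat.even_add_one]
    split_ifs <;> simp

theorem Reachable.sq_eq_of_mem_edgeProdFiber {x : V → U} {l : U} (hx : x ∈ G.edgeProdFiber l)
    {u v : V} (huv : G.Reachable u v) (hu : x u ^ 2 = l) : x v ^ 2 = l := by
  obtain ⟨p⟩ := huv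
  rw [p.apply_eq_of_mem_edgeProdFiber hx]
  split_ifs
  · exact hu
  · rw [mul_pow, inv_pow, hu, sq, mul_inv_cancel_right]

theorem ConnectedComponent.sq_apply_out_of_not_colorable {x : V → U} {l : U}
    (hx : x ∈ G.edgeProdFiber l) {c : G.ConnectedComponent}
    (hc : ¬ (G.induce c.supp).Colorable 2) : x c.out ^ 2 = l := by
  simp only [c.colorable_two_induce_supp_iff, not_forall, Nat.not_even_iff_odd] at hc
  obtain ⟨u, hu, w, hw⟩ := hc
  have hxu := w.apply_eq_of_mem_edgeProdFiber hx
  rw [if_neg (Nat.not_even_iff_odd.mpr hw), eq_mul_inv_iff_mul_eq, ← sq] at hxu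
  exact (c.reachable_of_mem_supp hu c.out_eq).sq_eq_of_mem_edgeProdFiber hx hxu

def alternatingExtension (G : SimpleGraph V) (l : U) (f : G.ConnectedComponent → U) :
    V → U := fun v =>
  if Even (G.dist (G.connectedComponentMk v).out v) then f (G.connectedComponentMk v)
  else l * (f (G.connectedComponentMk v))⁻¹

theorem alternatingExtension_mem_edgeProdFiber {l : U} {f : G.ConnectedComponent → U}
    (hf : ∀ c, ¬ (G.induce c.supp).Colorable 2 → f c ^ 2 = l) :
    G.alternatingExtension l f ∈ G.edgeProdFiber l := by
  intro a b hab
  simp only [alternatingExtension, ← ConnectedComponent.connectedComponentMk_eq_of_adj hab]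
  set c := G.connectedComponentMk a
  by_cases hc : (G.induce c.supp).Colorable 2
  · have hpar := (ConnectedComponent.exact c.out_eq).even_dist_iff_not_even_dist_of_adj
      (c.colorable_two_induce_supp_iff.mp hc _ c.out_eq) hab
    split_ifs with ha hb hb
    · exact absurd hb (hpar.mp ha)
    · simp
    · simp
    · exact absurd (hpar.mpr hb) ha
  · obtain rfl := hf c hc
    split_ifs <;> simp [sq]

theorem alternatingExtension_apply_out (l : U) (f : G.ConnectedComponent → U)
    (c : G.ConnectedComponent) : G.alternatingExtension l f c.out = f c := by
  have hc : G.connectedComponentMk c.out = c := c.out_eq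
  simp [alternatingExtension, hc]

theorem alternatingExtension_apply_out_eq {x : V → U} {l : U} (hx : x ∈ G.edgeProdFiber l) :
    G.alternatingExtension l (fun c => x c.out) = x := by
  funext v
  obtain ⟨p, hp⟩ :=
    (ConnectedComponent.exact (G.connectedComponentMk v).out_eq).exists_walk_length_eq_dist
  rw [p.apply_eq_of_mem_edgeProdFiber hx, hp]
  rfl

def edgeProdFiberEquiv (G : SimpleGraph V) (l : U) :
    G.edgeProdFiber l ≃
      {f : G.ConnectedComponent → U // ∀ c, ¬ (G.induce c.supp).Colorable 2 → f c ^ 2 = l} where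
  toFun x := ⟨fun c => x.1 c.out, fun _ => ConnectedComponent.sq_apply_out_of_not_colorable x.2⟩
  invFun f := ⟨G.alternatingExtension l f.1, alternatingExtension_mem_edgeProdFiber f.2⟩
  left_inv x := Subtype.ext (alternatingExtension_apply_out_eq x.2)
  right_inv f := Subtype.ext (funext (alternatingExtension_apply_out l f.1))

theorem card_edgeProdFiber [Finite V] (G : SimpleGraph V) (l : U) :
    Nat.card (G.edgeProdFiber l) =
      Nat.card U ^ Nat.card {c : G.ConnectedComponent // (G.induce c.supp).Colorable 2} *
        Nat.card {t : U | t ^ 2 = l} ^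
          Nat.card {c : G.ConnectedComponent // ¬ (G.induce c.supp).Colorable 2} := by
  rw [Nat.card_congr (G.edgeProdFiberEquiv l)]
  exact Nat.card_subtype_forall_not_imp_mem
    (fun c : G.ConnectedComponent => (G.induce c.supp).Colorable 2) {t | t ^ 2 = l}

theorem card_iUnion_edgeProdFiber [Finite V] [Fintype U] {a b : V} (hab : G.Adj a b) :
    Nat.card (⋃ l : U, G.edgeProdFiber l) =
      Nat.card U ^ Nat.card {c : G.ConnectedComponent // (G.induce c.supp).Colorable 2} *
        (Nat.card U * Nat.card (powMonoidHom 2 : U →* U).ker ^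
          (Nat.card {c : G.ConnectedComponent // ¬ (G.induce c.supp).Colorable 2} - 1)) := by
  have hdisj : Pairwise fun l l' : U => Disjoint (G.edgeProdFiber l) (G.edgeProdFiber l') :=
    fun l l' hll' =>
      Set.disjoint_left.mpr fun x hx hx' => hll' ((hx a b hab).symm.trans (hx' a b hab))
  rw [Nat.card_congr (Set.unionEqSigmaOfDisjoint hdisj), Nat.card_sigma]
  simp only [card_edgeProdFiber, ← Finset.mul_sum]
  exact congrArg _ ((powMonoidHom 2 : U →* U).sum_card_preimage_pow _)

end SimpleGraph

theorem edgeProd_mk {M : Type} [CommMonoid M] {n : ℕ} (x : Fin n → M) (a b : Fin n) :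
    edgeProd x s(a, b) = x a * x b := rfl

theorem edgeProd_mul {M : Type} [CommMonoid M] {n : ℕ} (x y : Fin n → M) (E : Sym2 (Fin n)) :
    edgeProd (x * y) E = edgeProd x E * edgeProd y E := by
  induction E using Sym2.ind with
  | h a b => exact mul_mul_mul_comm (x a) (y a) (x b) (y b)

def edgeMonomialHom (M : Type) [CommGroup M] {n s : ℕ} (e : Fin s → Sym2 (Fin n)) :
    (Fin n → M) →* (Fin s → M) :=
  MonoidHom.mk' (fun x i => edgeProd x (e i)) fun x y => funext fun i => edgeProd_mul x y (e i)

theorem forall_edgeProd_eq_iff_mem_edgeProdFiber {U : Type} [CommGroup U] {n s : ℕ}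
    {e : Fin s → Sym2 (Fin n)} (hnd : ∀ i, ¬ (e i).IsDiag) (x : Fin n → U) (l : U) :
    (∀ i, edgeProd x (e i) = l) ↔
      x ∈ (SimpleGraph.fromEdgeSet (Set.range e)).edgeProdFiber l := by
  constructor
  · rintro hx a b ⟨⟨i, hi⟩, -⟩
    rw [← edgeProd_mk, ← hi, hx]
  · intro hx i
    induction hi : e i using Sym2.ind with
    | h a b => exact hx a b ⟨⟨i, hi⟩, fun hab => hnd i (hi ▸ Sym2.mk_isDiag_iff.mpr hab)⟩

section EdgeMonomialHom

variable (K : Type) [Field K] {n s : ℕ} (e : Fin s → Sym2 (Fin n))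

theorem XCard_range_edgeProd_mul_card_comap [Finite K] :
    XCard K (Set.range fun (x : Fin n → Kˣ) (i : Fin s) => edgeProd x (e i)) *
      Nat.card ((diagSubgroup K s).comap (edgeMonomialHom Kˣ e)) = Nat.card Kˣ ^ n := by
  have := QuotientGroup.card_image_mk_range_mul_card_comap (edgeMonomialHom Kˣ e) (diagSubgroup K s)
  rwa [Nat.card_fun, Nat.card_fin] at this

theorem card_comap_diagSubgroup_edgeMonomialHom [Finite K] (hnd : ∀ i, ¬ (e i).IsDiag)
    (hs : 0 < s) {G : SimpleGraph (Fin n)} (hG : G = SimpleGraph.fromEdgeSet (Set.range e)) :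
    Nat.card ((diagSubgroup K s).comap (edgeMonomialHom Kˣ e)) =
      Nat.card Kˣ ^ Nat.card {c : G.ConnectedComponent // (G.induce c.supp).Colorable 2} *
        (Nat.card Kˣ * (Nat.card Kˣ).gcd 2 ^
          (Nat.card {c : G.ConnectedComponent // ¬ (G.induce c.supp).Colorable 2} - 1)) := by
  have := Fintype.ofFinite Kˣ
  subst hG
  obtain ⟨a, b, hab⟩ := SimpleGraph.exists_adj_fromEdgeSet_range (hnd ⟨0, hs⟩)
  rw [← IsCyclic.card_powMonoidHom_ker, ← SimpleGraph.card_iUnion_edgeProdFiber hab]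
  refine Nat.card_congr (Equiv.setCongr (Set.ext fun x => ?_))
  simp only [Set.mem_iUnion, ← forall_edgeProd_eq_iff_mem_edgeProdFiber hnd]
  exact ⟨fun ⟨l, hl⟩ => ⟨l, congrFun hl⟩, fun ⟨l, hl⟩ => ⟨l, funext hl⟩⟩

end EdgeMonomialHom

theorem length_formula_any_graph_general
    (q n s m γ : ℕ) (K : Type) [Field K] [Fintype K]
    (hcard : Fintype.card K = q) (hs : 2 ≤ s)
    (e : Fin s → Sym2 (Fin n))
    (hnd : ∀ i, ¬ (e i).IsDiag)
    (G : SimpleGraph (Fin n)) (hG : G = SimpleGraph.fromEdgeSet (Set.range e))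
    (hm : Nat.card G.ConnectedComponent = m)
    (hγ : Nat.card {c : G.ConnectedComponent //
        ¬ (G.induce c.supp).Colorable 2} = γ) :
    (1 ≤ γ → Odd q →
        2 ^ (γ - 1) * XCard K (Set.range fun (x : Fin n → Kˣ) (i : Fin s) => edgeProd x (e i))
          = (q - 1) ^ (n - m + γ - 1)) ∧
    (1 ≤ γ → Even q →
        XCard K (Set.range fun (x : Fin n → Kˣ) (i : Fin s) => edgeProd x (e i))
          = (q - 1) ^ (n - m + γ - 1)) ∧
    (γ = 0 →
        XCard K (Set.range fun (x : Fin n → Kˣ) (i : Fin s) => edgeProd x (e i))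
          = (q - 1) ^ (n - m - 1)) := by
  classical
  have hunits : Nat.card Kˣ = q - 1 := by
    rw [Nat.card_eq_fintype_card, Fintype.card_units, hcard]
  have hq : 0 < q - 1 := hcard ▸ Nat.sub_pos_of_lt Fintype.one_lt_card
  obtain ⟨a, b, hab⟩ := hG ▸ SimpleGraph.exists_adj_fromEdgeSet_range (hnd ⟨0, by omega⟩)
  have hmn : m < n := by
    simpa only [hm, Nat.card_fin] using SimpleGraph.ConnectedComponent.card_lt_of_adj hab
  have hcomponents :
      Nat.card {c : G.ConnectedComponent // (G.induce c.supp).Colorable 2} + γ = m := by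
    rw [← hm, ← hγ, ← Nat.card_sum, Nat.card_congr (Equiv.sumCompl _)]
  have hlagrange := XCard_range_edgeProd_mul_card_comap K e
  rw [card_comap_diagSubgroup_edgeMonomialHom K e hnd (by omega) hG, hunits, hγ,
    Nat.eq_sub_of_add_eq hcomponents] at hlagrange
  set X := XCard K (Set.range fun (x : Fin n → Kˣ) (i : Fin s) => edgeProd x (e i))
  have key : X * (q - 1).gcd 2 ^ (γ - 1) * (q - 1) ^ (m - γ + 1) = (q - 1) ^ n := by
    rw [← hlagrange]
    ring
  refine ⟨fun hγ1 hodd => ?_, fun hγ1 heven => ?_, fun hγ0 => ?_⟩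
  · rw [Nat.gcd_eq_right (Nat.Odd.sub_odd hodd odd_one).two_dvd,
      mul_comm X (2 ^ _)] at key
    exact Nat.eq_pow_of_mul_pow_eq hq (by omega) key
  · rw [(Nat.coprime_two_right.mpr (Nat.Even.sub_odd (by omega) heven odd_one)).gcd_eq_one,
      one_pow, mul_one] at key
    exact Nat.eq_pow_of_mul_pow_eq hq (by omega) key
  · rw [hγ0, Nat.zero_sub, pow_zero, mul_one] at key
    exact Nat.eq_pow_of_mul_pow_eq hq (by omega) key

/-- Let `G` be a simple graph with `n` vertices, `s ≥ 2` edges, no isolated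
vertices, exactly `m` connected components of which exactly `γ` are non-bipartite, over a
finite field `K` with `q > 2` elements.  Let `X` be the image in `(Kˣ)ˢ/Λ` of the algebraic
toric set `X*` parameterized by the edges of `G`.  Then: if `γ ≥ 1` and `q` is odd,
`2^(γ−1)·|X| = (q−1)^(n−m+γ−1)`; if `γ ≥ 1` and `q` is even, `|X| = (q−1)^(n−m+γ−1)`;
and if `γ = 0`, `|X| = (q−1)^(n−m−1)`. -/
theorem length_formula_any_graph
    (q n s m γ : ℕ) (hq : 2 < q) (K : Type) [Field K] [Fintype K]
    (hcard : Fintype.card K = q) (hs : 2 ≤ s)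
    (e : Fin s → Sym2 (Fin n)) (he : Function.Injective e)
    (hnd : ∀ i, ¬ (e i).IsDiag)
    (hiso : ∀ v : Fin n, ∃ i, v ∈ e i)
    (G : SimpleGraph (Fin n)) (hG : G = SimpleGraph.fromEdgeSet (Set.range e))
    (hm : Nat.card G.ConnectedComponent = m)
    (hγ : Nat.card {c : G.ConnectedComponent //
        ¬ (G.induce c.supp).Colorable 2} = γ) :
    (1 ≤ γ → Odd q →
        2 ^ (γ - 1) * XCard K (Set.range fun (x : Fin n → Kˣ) (i : Fin s) => edgeProd x (e i))
          = (q - 1) ^ (n - m + γ - 1)) ∧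
    (1 ≤ γ → Even q →
        XCard K (Set.range fun (x : Fin n → Kˣ) (i : Fin s) => edgeProd x (e i))
          = (q - 1) ^ (n - m + γ - 1)) ∧
    (γ = 0 →
        XCard K (Set.range fun (x : Fin n → Kˣ) (i : Fin s) => edgeProd x (e i))
          = (q - 1) ^ (n - m - 1)) :=
  length_formula_any_graph_general q n s m γ K hcard hs e hnd G hG hm hγ
end
end

section
/- Let X^* ⊆ (K^*)^s be the algebraic toric set parameterized by ν_1,…,ν_s ∈ ℕ^n and I(X) ⊆ S its vanishing ideal. Then there exists a finite set F of binomials t^a − t^b with |a| = |b|, supp(a) ∩ supp(b) = ∅, and a_i ≤ q−2 and b_i ≤ q−2 for all 1 ≤ i ≤ s, such that I(X) is generated as an ideal by F ∪ {t_i^{q−1} − t_j^{q−1} : 1 ≤ i, j ≤ s}. -/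
/-!
A monomial `t^m` evaluated along the parametrization is a character `x ↦ ∏ᵢ (x^{νᵢ})^{mᵢ}`
of `(K^*)^n`. By Dedekind's independence of characters, a polynomial vanishing on `X^*` has
coefficients summing to zero over each set of monomials with the same character, so it is a
combination of binomials `t^a - t^b` with equal characters; if it is homogeneous, `|a| = |b|`.
Such a binomial lies in the ideal generated by the small binomials and the `t_i^{q-1} - t_j^{q-1}`,
by induction on the degree: a common factor of `t^a` and `t^b` is cancelled (characters take
values in `K^*`), and an exponent `a_i ≥ q - 1` is traded, modulo `t_i^{q-1} - t_j^{q-1}`, for one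
at a variable `t_j` dividing `t^b`, which creates a common factor.
-/

open MvPolynomial

noncomputable section

/-- The vanishing ideal `I(X) ⊆ K[t_1,…,t_s]` of the algebraic toric set parameterized by
`ν_1,…,ν_s ∈ ℕ^n`. -/
def toricVanishingIdeal (K : Type) [Field K] {n s : ℕ} (ν : Fin s → Fin n → ℕ) :
    Ideal (MvPolynomial (Fin s) K) :=
  Ideal.span {f | (∃ d, f.IsHomogeneous d) ∧
    ∀ x : Fin n → Kˣ, eval (fun i => ((∏ j, x j ^ ν i j : Kˣ) : K)) f = 0}

section

variable {G σ L : Type*} [Monoid G] [CommRing L]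

lemma monomial_add_sub_monomial_add_mem {I : Ideal (MvPolynomial σ L)} {a b : σ →₀ ℕ}
    (c : σ →₀ ℕ) (h : monomial a 1 - monomial b 1 ∈ I) :
    monomial (c + a) (1 : L) - monomial (c + b) 1 ∈ I := by
  have hfactor : monomial (c + a) (1 : L) - monomial (c + b) 1 =
      monomial c 1 * (monomial a 1 - monomial b 1) := by
    simp [mul_sub, monomial_mul]
  exact hfactor ▸ I.mul_mem_left _ h

def monomialChar (P : G →* (σ → L)) (m : σ →₀ ℕ) : G →* L where
  toFun x := eval (P x) (monomial m 1)
  map_one' := by simp [eval_monomial]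
  map_mul' x y := by simp [eval_monomial, mul_pow, Finsupp.prod_mul]

def powerDifferences (N : ℕ) : Set (MvPolynomial σ L) :=
  {p | ∃ i j : σ, p = X i ^ N - X j ^ N}

variable (P : G →* (σ → L))

lemma monomialChar_apply (m : σ →₀ ℕ) (x : G) :
    monomialChar P m x = eval (P x) (monomial m 1) := rfl

lemma monomialChar_add (a b : σ →₀ ℕ) :
    monomialChar P (a + b) = monomialChar P a * monomialChar P b := by
  ext x
  rw [MonoidHom.mul_apply, monomialChar_apply, monomialChar_apply, monomialChar_apply, ← map_mul,
    monomial_mul, one_mul]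

def smallBinomials (N : ℕ) : Set (MvPolynomial σ L) :=
  {f | ∃ a b : σ →₀ ℕ, f = monomial a 1 - monomial b 1 ∧ a.degree = b.degree ∧
    Disjoint a.support b.support ∧ (∀ i, a i < N) ∧ (∀ i, b i < N) ∧
    monomialChar P a = monomialChar P b}

lemma smallBinomials_finite [Finite σ] (N : ℕ) : (smallBinomials P N).Finite := by
  classical
  have hsmall : {a : σ →₀ ℕ | ∀ i, a i < N}.Finite :=
    (Set.finite_Iic (Finsupp.equivFunOnFinite.symm fun _ => N)).subset
      fun a ha => Finsupp.le_def.mpr fun i => (ha i).le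
  refine ((hsmall.prod hsmall).image fun ab => monomial ab.1 (1 : L) - monomial ab.2 1).subset ?_
  rintro _ ⟨a, b, rfl, -, -, ha, hb, -⟩
  exact ⟨(a, b), ⟨ha, hb⟩, rfl⟩

def homogeneousVanishingIdeal : Ideal (MvPolynomial σ L) :=
  Ideal.span {f | (∃ d, f.IsHomogeneous d) ∧ ∀ x, eval (P x) f = 0}

section Dedekind

variable [IsDomain L]

open Classical in
lemma sum_coeff_fiber_monomialChar_eq_zero {f : MvPolynomial σ L}
    (hf : ∀ x, eval (P x) f = 0) (χ : G →* L) :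
    ∑ m ∈ f.support with monomialChar P m = χ, coeff m f = 0 := by
  set S := f.support.image (monomialChar P)
  have hmaps : ∀ m ∈ f.support, monomialChar P m ∈ S := fun m hm => Finset.mem_image_of_mem _ hm
  by_cases hχ : χ ∈ S
  swap
  · refine Finset.sum_eq_zero fun m hm => absurd ?_ hχ
    obtain ⟨hm', rfl⟩ := Finset.mem_filter.mp hm
    exact hmaps m hm'
  refine linearIndependent_iff'.mp (linearIndependent_monoidHom G L) S
    (fun χ => ∑ m ∈ f.support with monomialChar P m = χ, coeff m f) ?_ χ hχ
  ext x
  calc _ = ∑ χ ∈ S, ∑ m ∈ f.support with monomialChar P m = χ, coeff m f * monomialChar P m x := by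
        simp only [Finset.sum_apply, Pi.smul_apply, smul_eq_mul, Finset.sum_mul]
        refine Finset.sum_congr rfl fun χ _ => Finset.sum_congr rfl fun m hm => ?_
        rw [(Finset.mem_filter.mp hm).2]
    _ = eval (P x) f := by
        rw [Finset.sum_fiberwise_of_maps_to hmaps]
        simp [monomialChar_apply, eval_eq]
    _ = 0 := hf x

lemma mem_ideal_of_forall_eval_eq_zero {f : MvPolynomial σ L}
    (hf : ∀ x, eval (P x) f = 0) {I : Ideal (MvPolynomial σ L)}
    (hI : ∀ a ∈ f.support, ∀ b ∈ f.support, monomialChar P a = monomialChar P b →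
      monomial a 1 - monomial b 1 ∈ I) :
    f ∈ I := by
  classical
  set r := Function.invFunOn (monomialChar P) f.support
  have hr : ∀ m ∈ f.support,
      r (monomialChar P m) ∈ f.support ∧ monomialChar P (r (monomialChar P m)) = monomialChar P m :=
    fun m hm => ⟨Function.invFunOn_mem ⟨m, hm, rfl⟩, Function.invFunOn_eq ⟨m, hm, rfl⟩⟩
  have hreps : ∑ m ∈ f.support, coeff m f • monomial (r (monomialChar P m)) (1 : L) = 0 := by
    rw [← Finset.sum_fiberwise_of_maps_to
      fun m hm => Finset.mem_image_of_mem (monomialChar P) hm]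
    refine Finset.sum_eq_zero fun χ _ => ?_
    calc _ = ∑ m ∈ f.support with monomialChar P m = χ, coeff m f • monomial (r χ) (1 : L) :=
          Finset.sum_congr rfl fun m hm => by rw [(Finset.mem_filter.mp hm).2]
      _ = 0 := by rw [← Finset.sum_smul, sum_coeff_fiber_monomialChar_eq_zero P hf, zero_smul]
  have hdecomp :
      f = ∑ m ∈ f.support, coeff m f • (monomial m 1 - monomial (r (monomialChar P m)) 1) := by
    simp_rw [smul_sub, Finset.sum_sub_distrib, hreps, sub_zero, smul_monomial, smul_eq_mul, mul_one]
    exact f.as_sum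
  rw [hdecomp]
  exact Ideal.sum_mem _ fun m hm =>
    Submodule.smul_of_tower_mem _ _ (hI m hm _ (hr m hm).1 (hr m hm).2.symm)

end Dedekind

variable {N : ℕ} (hP : ∀ x i, P x i ^ N = 1)
include hP

lemma monomialChar_single_eq (i j : σ) :
    monomialChar P (Finsupp.single i N) = monomialChar P (Finsupp.single j N) := by
  ext x
  simp [monomialChar_apply, eval_monomial, hP]

lemma exists_exchange_mem_span {a : σ →₀ ℕ} {i : σ} (hi : N ≤ a i) (j : σ) :
    ∃ a' : σ →₀ ℕ, a'.degree = a.degree ∧ monomialChar P a' = monomialChar P a ∧ N ≤ a' j ∧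
      monomial a (1 : L) - monomial a' 1 ∈ Ideal.span (smallBinomials P N ∪ powerDifferences N) := by
  obtain ⟨e, rfl⟩ : ∃ e, a = e + Finsupp.single i N :=
    ⟨a - Finsupp.single i N, (tsub_add_cancel_of_le (Finsupp.single_le_iff.mpr hi)).symm⟩
  refine ⟨e + Finsupp.single j N, by simp, ?_, by simp, ?_⟩
  · rw [monomialChar_add, monomialChar_add, monomialChar_single_eq P hP j i]
  · exact monomial_add_sub_monomial_add_mem e
      (Ideal.subset_span (Or.inr ⟨i, j, by simp [X_pow_eq_monomial]⟩))

variable [IsDomain L] (hN : 0 < N)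
include hN

lemma monomialChar_ne_zero (m : σ →₀ ℕ) (x : G) : monomialChar P m x ≠ 0 := by
  rw [monomialChar_apply, eval_monomial, one_mul]
  refine Finsupp.prod_ne_zero_iff.mpr fun i _ => pow_ne_zero _ fun h => ?_
  simpa [h, hN.ne'] using hP x i

lemma monomialChar_add_left_cancel {a b c : σ →₀ ℕ}
    (h : monomialChar P (c + a) = monomialChar P (c + b)) :
    monomialChar P a = monomialChar P b := by
  ext x
  have hx := DFunLike.congr_fun h x
  rw [monomialChar_add, monomialChar_add, MonoidHom.mul_apply, MonoidHom.mul_apply] at hx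
  exact mul_left_cancel₀ (monomialChar_ne_zero P hP hN c x) hx

lemma monomial_sub_monomial_mem_of_inf_ne_zero {I : Ideal (MvPolynomial σ L)} {a b : σ →₀ ℕ}
    (hdeg : a.degree = b.degree) (hχ : monomialChar P a = monomialChar P b) (hc : a ⊓ b ≠ 0)
    (ih : ∀ a' b' : σ →₀ ℕ, a'.degree < a.degree → a'.degree = b'.degree →
      monomialChar P a' = monomialChar P b' → monomial a' (1 : L) - monomial b' 1 ∈ I) :
    monomial a (1 : L) - monomial b 1 ∈ I := by
  obtain ⟨a', ha'⟩ := le_iff_exists_add.mp (inf_le_left : a ⊓ b ≤ a)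
  obtain ⟨b', hb'⟩ := le_iff_exists_add.mp (inf_le_right : a ⊓ b ≤ b)
  generalize a ⊓ b = c at hc ha' hb'
  subst ha' hb'
  have hc' : c.degree ≠ 0 := (Finsupp.degree_eq_zero_iff _).not.mpr hc
  rw [map_add, map_add] at hdeg
  exact monomial_add_sub_monomial_add_mem _ (ih a' b' (by rw [map_add]; omega) (by omega)
    (monomialChar_add_left_cancel P hP hN hχ))

theorem monomial_sub_monomial_mem_span {a b : σ →₀ ℕ} (hdeg : a.degree = b.degree)
    (hχ : monomialChar P a = monomialChar P b) :
    monomial a (1 : L) - monomial b 1 ∈ Ideal.span (smallBinomials P N ∪ powerDifferences N) := by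
  classical
  set J := Ideal.span (smallBinomials P N ∪ powerDifferences N)
  induction hd : a.degree using Nat.strong_induction_on generalizing a b with
  | _ d IH =>
  have of_large_exponent : ∀ a b : σ →₀ ℕ, a.degree = d → a.degree = b.degree →
      monomialChar P a = monomialChar P b → ∀ i, N ≤ a i →
      monomial a (1 : L) - monomial b 1 ∈ J := by
    intro a b ha hdeg hχ i hi
    have hb0 : b ≠ 0 := by
      rintro rfl
      have := Finsupp.le_degree i a
      simp only [map_zero] at hdeg
      omega
    obtain ⟨j, hj⟩ := Finsupp.support_nonempty_iff.mpr hb0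
    obtain ⟨a', ha', hχ', hj', hmem⟩ := exists_exchange_mem_span P hP hi j
    rw [← sub_add_sub_cancel _ (monomial a' (1 : L))]
    refine J.add_mem hmem (monomial_sub_monomial_mem_of_inf_ne_zero P hP hN (ha'.trans hdeg)
      (hχ'.trans hχ) (fun h => ?_) fun _ _ hlt hdeg' hχ'' => IH _ (by omega) hdeg' hχ'' rfl)
    have := DFunLike.congr_fun h j
    simp only [Finsupp.inf_apply, Finsupp.coe_zero, Pi.zero_apply] at this
    rw [Finsupp.mem_support_iff] at hj
    omega
  by_cases ha : ∃ i, N ≤ a i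
  · obtain ⟨i, hi⟩ := ha
    exact of_large_exponent a b hd hdeg hχ i hi
  by_cases hb : ∃ i, N ≤ b i
  · obtain ⟨i, hi⟩ := hb
    rw [← neg_sub]
    exact J.neg_mem (of_large_exponent b a (hdeg ▸ hd) hdeg.symm hχ.symm i hi)
  by_cases hc : a ⊓ b = 0
  · push Not at ha hb
    refine Ideal.subset_span (Or.inl ⟨a, b, rfl, hdeg, ?_, ha, hb, hχ⟩)
    rw [Finset.disjoint_iff_inter_eq_empty, ← Finsupp.support_inf, hc, Finsupp.support_zero]
  · exact monomial_sub_monomial_mem_of_inf_ne_zero P hP hN hdeg hχ hc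
      fun _ _ hlt hdeg' hχ' => IH _ (hd ▸ hlt) hdeg' hχ' rfl

theorem homogeneousVanishingIdeal_eq_span :
    homogeneousVanishingIdeal P = Ideal.span (smallBinomials P N ∪ powerDifferences N) := by
  apply le_antisymm
  · rw [homogeneousVanishingIdeal, Ideal.span_le]
    rintro f ⟨⟨d, hf⟩, hzero⟩
    refine mem_ideal_of_forall_eval_eq_zero P hzero fun a ha b hb hχ =>
      monomial_sub_monomial_mem_span P hP hN ?_ hχ
    rw [Finsupp.degree_apply, Finsupp.degree_apply, ← hf.degree_eq_sum_deg_support ha,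
      ← hf.degree_eq_sum_deg_support hb]
  · rw [Ideal.span_le]
    rintro g (⟨a, b, rfl, hdeg, -, -, -, hχ⟩ | ⟨i, j, rfl⟩)
    · refine Ideal.subset_span ⟨⟨a.degree, (isHomogeneous_monomial 1 rfl).sub
        (isHomogeneous_monomial 1 hdeg.symm)⟩, fun x => ?_⟩
      rw [map_sub, ← monomialChar_apply, ← monomialChar_apply, hχ, sub_self]
    · exact Ideal.subset_span ⟨⟨N, (isHomogeneous_X_pow i N).sub (isHomogeneous_X_pow j N)⟩,
        fun x => by simp [hP]⟩

end

def toricParametrization (K : Type*) [Field K] {n s : ℕ} (ν : Fin s → Fin n → ℕ) :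
    (Fin n → Kˣ) →* (Fin s → K) where
  toFun x i := ((∏ j, x j ^ ν i j : Kˣ) : K)
  map_one' := by ext; simp
  map_mul' x y := by ext; simp [mul_pow, Finset.prod_mul_distrib]

theorem generators_with_small_exponents_general
    (q n s : ℕ) (K : Type) [Field K] [Fintype K]
    (hcard : Fintype.card K = q)
    (ν : Fin s → Fin n → ℕ) :
    ∃ F : Set (MvPolynomial (Fin s) K), F.Finite ∧
      (∀ f ∈ F, ∃ a b : Fin s →₀ ℕ,
        f = monomial a 1 - monomial b 1 ∧
        (∑ i, a i) = (∑ i, b i) ∧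
        Disjoint a.support b.support ∧
        (∀ i, a i ≤ q - 2) ∧ (∀ i, b i ≤ q - 2)) ∧
      toricVanishingIdeal K ν = Ideal.span
        (F ∪ {p : MvPolynomial (Fin s) K |
          ∃ i j : Fin s, p = X i ^ (q - 1) - X j ^ (q - 1)}) := by
  set P := toricParametrization K ν
  have hP : ∀ x i, P x i ^ (q - 1) = 1 := fun x i =>
    hcard ▸ FiniteField.pow_card_sub_one_eq_one _ (Units.ne_zero _)
  have hN : 0 < q - 1 := by
    have := Fintype.one_lt_card (α := K)
    omega
  have hI : toricVanishingIdeal K ν = homogeneousVanishingIdeal P := rfl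
  refine ⟨smallBinomials P (q - 1), smallBinomials_finite P _, ?_,
    hI.trans (homogeneousVanishingIdeal_eq_span P hP hN)⟩
  rintro f ⟨a, b, rfl, hdeg, hdisj, ha, hb, -⟩
  refine ⟨a, b, rfl, by simpa only [Finsupp.degree_eq_sum] using hdeg, hdisj,
    fun i => ?_, fun i => ?_⟩
  · have := ha i; omega
  · have := hb i; omega

/-- There is a finite set `F` of homogeneous binomials `t^a − t^b` with
`supp(a) ∩ supp(b) = ∅` and all exponents `≤ q−2`, such that `I(X)` is generated by
`F` together with the toric relations `t_i^{q−1} − t_j^{q−1}`. -/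
theorem generators_with_small_exponents
    (q n s : ℕ) (hq : 2 < q) (hs : 2 ≤ s) (K : Type) [Field K] [Fintype K]
    (hcard : Fintype.card K = q)
    (ν : Fin s → Fin n → ℕ) :
    ∃ F : Set (MvPolynomial (Fin s) K), F.Finite ∧
      (∀ f ∈ F, ∃ a b : Fin s →₀ ℕ,
        f = monomial a 1 - monomial b 1 ∧
        (∑ i, a i) = (∑ i, b i) ∧
        Disjoint a.support b.support ∧
        (∀ i, a i ≤ q - 2) ∧ (∀ i, b i ≤ q - 2)) ∧
      toricVanishingIdeal K ν = Ideal.span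
        (F ∪ {p : MvPolynomial (Fin s) K |
          ∃ i j : Fin s, p = X i ^ (q - 1) - X j ^ (q - 1)}) :=
  generators_with_small_exponents_general q n s K hcard ν
end
end

section
/- Let G = C_{2k} be the even cycle (k ≥ 2, s = 2k). Let σ = A ⊔ B be a partition of {1,…,s} with 1 ∈ A and let r ∈ {1,…,q−2}. If f_σ^r ∈ I(X), then |A| = |B|. -/
open MvPolynomial

noncomputable section

/-- The vanishing ideal `I(X) ⊆ K[t_1,…,t_{2k}]` of the algebraic toric set
`X* = {(x_1x_2, x_2x_3, …, x_{2k}x_1) : x ∈ (Kˣ)^{2k}}` parameterized by the edges of the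
even cycle `C_{2k}`. -/
def cycleVanishingIdeal (K : Type) [Field K] (k : ℕ) :
    Ideal (MvPolynomial (Fin (2 * k)) K) :=
  Ideal.span {f | (∃ d, f.IsHomogeneous d) ∧
    ∀ x : Fin (2 * k) → Kˣ,
      eval (fun i => ((x i * x (finRotate (2 * k) i) : Kˣ) : K)) f = 0}

/-- The recursive labelling function `ρ_σ^r` (with indices `0,…,s−1`, so that the paper's
index `i ∈ {1,…,s}` corresponds to `i−1` here).  The partition `σ = A ⊔ B` of
`{0,…,s−1}` is recorded by the finset `A`, `B` being its complement;
`ρ(0) = r` and `ρ(i+1) = q−1−ρ(i)` if `i` and `i+1` lie in the same part of `σ`,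
`ρ(i+1) = ρ(i)` otherwise. -/
def rho (q : ℕ) (A : Finset ℕ) (r : ℕ) : ℕ → ℕ
  | 0 => r
  | i + 1 => if (i ∈ A ↔ i + 1 ∈ A) then q - 1 - rho q A r i else rho q A r i

/-- The binomial `f_σ^r = t^a − t^b` associated to a partition `σ = A ⊔ B` of
`{0,…,2k−1}` (with `0 ∈ A`) and `r ∈ {1,…,q−2}`: `supp(a) = A`, `supp(b) = B`, and the
exponent of `t_i` is `ρ_σ^r(i)`. -/
def fsr (K : Type) [Field K] (q k : ℕ) (A : Finset ℕ) (r : ℕ) :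
    MvPolynomial (Fin (2 * k)) K :=
  monomial (Finsupp.equivFunOnFinite.symm fun i : Fin (2 * k) =>
      if (i : ℕ) ∈ A then rho q A r i else 0) 1 -
  monomial (Finsupp.equivFunOnFinite.symm fun i : Fin (2 * k) =>
      if (i : ℕ) ∈ A then 0 else rho q A r i) 1

/-!
Every generator of `I(X)` is homogeneous and vanishes at `(1, …, 1) ∈ X*`, so it is killed by
the substitution `t_i ↦ X` into `K[X]`. Hence so is `f_σ^r = t^a − t^b`, which forces
`|a| = |b|`. On `A` the exponents `ρ_σ^r(i)` are the terms of the alternating sequence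
`r, r̂, r, r̂, …`; on `B` they are their complements `q − 1 − ·`. So `|a| = |b|` says that the
alternating sequence summed over all `2k` indices, which is `k(q − 1)`, equals `(q − 1)|B|`.
-/

namespace MvPolynomial

variable {R σ : Type*} [CommRing R]

theorem aeval_const_X_monomial (d : σ →₀ ℕ) (c : R) :
    aeval (fun _ => (Polynomial.X : Polynomial R)) (monomial d c) =
      Polynomial.C c * Polynomial.X ^ d.degree := by
  rw [aeval_monomial, Polynomial.algebraMap_eq, Finsupp.prod, Finset.prod_pow_eq_pow_sum,
    Finsupp.degree_apply]

theorem IsHomogeneous.aeval_const_X {g : MvPolynomial σ R} {n : ℕ} (hg : g.IsHomogeneous n) :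
    MvPolynomial.aeval (fun _ => (Polynomial.X : Polynomial R)) g =
      Polynomial.C (eval 1 g) * Polynomial.X ^ n := by
  conv_lhs => rw [g.as_sum]
  rw [map_sum, eval_eq, map_sum, Finset.sum_mul]
  refine Finset.sum_congr rfl fun d hd => ?_
  have hdeg : d.degree = n := by
    rw [Finsupp.degree_eq_weight_one]; exact hg (mem_support_iff.mp hd)
  simp [aeval_const_X_monomial, hdeg]

theorem span_isHomogeneous_eval_one_le_ker :
    Ideal.span {g : MvPolynomial σ R | (∃ n, g.IsHomogeneous n) ∧ eval 1 g = 0} ≤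
      RingHom.ker (aeval (fun _ => (Polynomial.X : Polynomial R))) := by
  rw [Ideal.span_le]
  rintro g ⟨⟨n, hg⟩, hg1⟩
  simp [hg.aeval_const_X, hg1]

theorem degree_eq_of_monomial_sub_monomial_mem_span [Nontrivial R] {a b : σ →₀ ℕ}
    (h : monomial a (1 : R) - monomial b 1 ∈
      Ideal.span {g : MvPolynomial σ R | (∃ n, g.IsHomogeneous n) ∧ eval 1 g = 0}) :
    a.degree = b.degree := by
  have hX := RingHom.mem_ker.mp (span_isHomogeneous_eval_one_le_ker h)
  rw [map_sub, sub_eq_zero, aeval_const_X_monomial, aeval_const_X_monomial] at hX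
  simpa using congrArg Polynomial.natDegree hX

end MvPolynomial

theorem cycleVanishingIdeal_le_span_isHomogeneous_eval_one (K : Type) [Field K] (k : ℕ) :
    cycleVanishingIdeal K k ≤
      Ideal.span {g | (∃ n, g.IsHomogeneous n) ∧ eval 1 g = 0} :=
  Ideal.span_mono fun _ ⟨hhom, hvan⟩ => ⟨hhom, by simpa [Pi.one_def] using hvan 1⟩

theorem sum_rho_eq_of_fsr_mem {K : Type} [Field K] {q k r : ℕ} {A : Finset ℕ}
    (hA : A ⊆ Finset.range (2 * k)) (hmem : fsr K q k A r ∈ cycleVanishingIdeal K k) :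
    ∑ i ∈ A, rho q A r i = ∑ i ∈ Finset.range (2 * k) \ A, rho q A r i := by
  have hdeg := degree_eq_of_monomial_sub_monomial_mem_span
    (cycleVanishingIdeal_le_span_isHomogeneous_eval_one K k hmem)
  simp only [Finsupp.degree_eq_sum, Finsupp.equivFunOnFinite_symm_apply_apply] at hdeg
  rw [Fin.sum_univ_eq_sum_range (fun i => if i ∈ A then rho q A r i else 0),
    Fin.sum_univ_eq_sum_range (fun i => if i ∈ A then 0 else rho q A r i),
    Finset.sum_ite_mem, Finset.inter_eq_right.mpr hA, Finset.sum_ite, Finset.sum_const_zero,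
    zero_add, Finset.filter_notMem_eq_sdiff] at hdeg
  exact hdeg

def alternating (a b i : ℕ) : ℕ := if Even i then a else b

theorem sum_range_two_mul_alternating (a b k : ℕ) :
    ∑ i ∈ Finset.range (2 * k), alternating a b i = k * (a + b) := by
  induction k with
  | zero => simp
  | succ k ih =>
    rw [Nat.mul_succ, Finset.sum_range_succ, Finset.sum_range_succ, ih]
    simp only [alternating, if_pos (even_two_mul k), if_neg (Nat.not_even_two_mul_add_one k)]
    ring

theorem rho_eq_ite {q r : ℕ} {A : Finset ℕ} (h0 : 0 ∈ A) (hr : r ≤ q - 1) (i : ℕ) :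
    rho q A r i =
      if i ∈ A then alternating r (q - 1 - r) i else q - 1 - alternating r (q - 1 - r) i := by
  induction i with
  | zero => simp [rho, alternating, h0]
  | succ i ih =>
    rw [rho, ih]
    by_cases hi : i ∈ A <;> by_cases hi1 : i + 1 ∈ A <;> by_cases hp : Even i <;>
      simp [alternating, hi, hi1, hp, Nat.even_add_one] <;> omega

theorem Finset.mul_card_sdiff_eq_sum {ι : Type*} [DecidableEq ι] {S A : Finset ι} {f : ι → ℕ}
    {c : ℕ} (hA : A ⊆ S) (hf : ∀ i ∈ S \ A, f i ≤ c)
    (h : ∑ i ∈ A, f i = ∑ i ∈ S \ A, (c - f i)) :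
    c * (S \ A).card = ∑ i ∈ S, f i := by
  rw [← Finset.sum_sdiff hA, h, ← Finset.sum_add_distrib,
    Finset.sum_congr rfl fun i hi => add_tsub_cancel_of_le (hf i hi), Finset.sum_const,
    smul_eq_mul, mul_comm]

theorem mul_card_sdiff_eq_of_sum_rho_eq {q k r : ℕ} {A : Finset ℕ}
    (hA : A ⊆ Finset.range (2 * k)) (h0 : 0 ∈ A) (hr : r ≤ q - 1)
    (h : ∑ i ∈ A, rho q A r i = ∑ i ∈ Finset.range (2 * k) \ A, rho q A r i) :
    (q - 1) * (Finset.range (2 * k) \ A).card = k * (q - 1) := by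
  have hle : ∀ i, alternating r (q - 1 - r) i ≤ q - 1 := fun i => by
    unfold alternating; split_ifs <;> omega
  have hsumA : ∑ i ∈ A, rho q A r i = ∑ i ∈ A, alternating r (q - 1 - r) i :=
    Finset.sum_congr rfl fun i hi => by rw [rho_eq_ite h0 hr, if_pos hi]
  have hsumB : ∑ i ∈ Finset.range (2 * k) \ A, rho q A r i =
      ∑ i ∈ Finset.range (2 * k) \ A, (q - 1 - alternating r (q - 1 - r) i) :=
    Finset.sum_congr rfl fun i hi => by rw [rho_eq_ite h0 hr, if_neg (Finset.mem_sdiff.mp hi).2]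
  rw [hsumA, hsumB] at h
  rw [Finset.mul_card_sdiff_eq_sum hA (fun i _ => hle i) h, sum_range_two_mul_alternating]
  congr 1
  omega

theorem homogeneity_condition_general
    (q k : ℕ) (hq : 2 < q) (K : Type) [Field K]
    (A : Finset ℕ) (hA : A ⊆ Finset.range (2 * k)) (h0 : 0 ∈ A)
    (r : ℕ) (hr2 : r ≤ q - 2)
    (hmem : fsr K q k A r ∈ cycleVanishingIdeal K k) :
    A.card = (Finset.range (2 * k) \ A).card := by
  have hB := mul_card_sdiff_eq_of_sum_rho_eq hA h0 (by omega) (sum_rho_eq_of_fsr_mem hA hmem)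
  have hBk : (Finset.range (2 * k) \ A).card = k :=
    Nat.eq_of_mul_eq_mul_left (by omega) (hB.trans (mul_comm _ _))
  have hpartition := Finset.card_sdiff_add_card_eq_card hA
  rw [Finset.card_range] at hpartition
  omega

/-- Let `G = C_{2k}` (`k ≥ 2`, `s = 2k`), `σ = A ⊔ B` a partition of the
index set with `0 ∈ A` (paper: `1 ∈ A`) and `r ∈ {1,…,q−2}`.  If `f_σ^r ∈ I(X)` then
`|A| = |B|`. -/
theorem homogeneity_condition
    (q k : ℕ) (hq : 2 < q) (hk : 2 ≤ k) (K : Type) [Field K] [Fintype K]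
    (hcard : Fintype.card K = q)
    (A : Finset ℕ) (hA : A ⊆ Finset.range (2 * k)) (h0 : 0 ∈ A)
    (r : ℕ) (hr1 : 1 ≤ r) (hr2 : r ≤ q - 2)
    (hmem : fsr K q k A r ∈ cycleVanishingIdeal K k) :
    A.card = (Finset.range (2 * k) \ A).card :=
  homogeneity_condition_general q k hq K A hA h0 r hr2 hmem
end
end
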